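/- There exist constants C > 1 and n₀ ≥ 1 such that for every integer n ≥ n₀ and every ψ ∈ (arccos(1/a), π/2) with 1 − 1/n² < a·cos ψ < 1 − 1/(n+1)², the function ζ is differentiable at ψ and C^{-1}·n³ ≤ −ζ'(ψ) ≤ C·n³. -/

import Mathlib

open MeasureTheory Set Real

noncomputable section

/-- The profile of the surface of revolution: `ξ(s) = 1` for `s ≤ L` and
`ξ(s) = 1 + (s-L)^r` for `s ≥ L`. -/
def profileXi (r L : ℝ) (s : ℝ) : ℝ := if s ≤ L then 1 else 1 + (s - L) ^ r

/-- The derivative of the profile. -/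
def profileXi' (r L : ℝ) (s : ℝ) : ℝ := if s ≤ L then 0 else r * (s - L) ^ (r - 1)

/-- `A(s) = √(1 + ξ'(s)²)/ξ(s)`. -/
def profileA (r L : ℝ) (s : ℝ) : ℝ :=
  Real.sqrt (1 + profileXi' r L s ^ 2) / profileXi r L s

/-- The angular displacement function of crossing geodesics:
`ζ(ψ) = 2 a cos ψ ∫₀^{ε₁} A(s) (ξ(s)² - a² cos² ψ)^{-1/2} ds`, where `a = ξ(ε₁)`. -/
def zetaFun (r L ε₁ a : ℝ) (ψ : ℝ) : ℝ :=
  2 * a * Real.cos ψ *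
    ∫ s in (0:ℝ)..ε₁,
      profileA r L s * (profileXi r L s ^ 2 - a ^ 2 * Real.cos ψ ^ 2) ^ (-(1/2) : ℝ)

/-!
Put `k = (a cos ψ)²` and `I_p(k) = ∫₀^{ε₁} A (ξ² - k)^p`, so that `ζ(ψ) = 2 a cos ψ · I_{-1/2}(k)`.
Differentiating under the integral sign gives `-ζ'(ψ) = 2 a sin ψ · (I_{-1/2}(k) + k I_{-3/2}(k))`.
As `ξ ≥ 1`, with `ξ = A = 1` on `[0, L]`, each `I_p(k)` with `p ≤ 0` is comparable to `(1 - k)^p`,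
and `(1 - k)^{-1/2} + k (1 - k)^{-3/2} = (1 - k)^{-3/2}`; moreover `a sin ψ ≥ √(a² - 1)`.
Hence `-ζ'(ψ) ≍ (1 - k)^{-3/2}`, while on the `n`-th band `1/(n+1)² < 1 - k < 2/n²`.
-/

theorem hasDerivAt_intervalIntegral_mul_rpow_sub {A g : ℝ → ℝ} {a b m k p : ℝ}
    (hA : Continuous A) (hg : Continuous g) (hgm : ∀ s, m ≤ g s) (hk : k < m) :
    HasDerivAt (fun x => ∫ s in a..b, A s * (g s - x) ^ p)
      (-p * ∫ s in a..b, A s * (g s - k) ^ (p - 1)) k := by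
  obtain ⟨ε, hε, hεm⟩ : ∃ ε, 0 < ε ∧ k + ε < m := ⟨(m - k) / 2, by linarith, by linarith⟩
  have hpos : ∀ x ∈ Metric.closedBall k ε, ∀ s, 0 < g s - x := fun x hx s => by
    linarith [hgm s, (abs_le.1 (Metric.mem_closedBall.1 hx)).2]
  have hcont : ∀ x ∈ Metric.closedBall k ε, ∀ q : ℝ, Continuous fun s => A s * (g s - x) ^ q :=
    fun x hx q => hA.mul <| (hg.sub continuous_const).rpow_const (f := fun s => g s - x)
      fun s => Or.inl (hpos x hx s).ne'
  have hk_mem : k ∈ Metric.closedBall k ε := Metric.mem_closedBall_self hε.le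
  obtain ⟨B, hB⟩ := ((isCompact_closedBall k ε).prod (isCompact_uIcc (a := a) (b := b)))
    |>.exists_bound_of_continuousOn (f := fun q : ℝ × ℝ => A q.2 * (g q.2 - q.1) ^ (p - 1))
    ((hA.comp continuous_snd).continuousOn.mul
      (((hg.comp continuous_snd).sub continuous_fst).continuousOn.rpow_const
        fun q hq => Or.inl (hpos q.1 hq.1 q.2).ne'))
  have key := intervalIntegral.hasDerivAt_integral_of_dominated_loc_of_deriv_le (μ := volume)
    (a := a) (b := b) (x₀ := k) (F := fun x s => A s * (g s - x) ^ p)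
    (F' := fun x s => -p * (A s * (g s - x) ^ (p - 1))) (bound := fun _ => |p| * B)
    (Metric.ball_mem_nhds k hε)
    (Filter.eventually_of_mem (Metric.ball_mem_nhds k hε) fun x hx =>
      (hcont x (Metric.ball_subset_closedBall hx) p).aestronglyMeasurable)
    ((hcont k hk_mem p).intervalIntegrable a b)
    (continuous_const.mul (hcont k hk_mem (p - 1))).aestronglyMeasurable
    (Filter.Eventually.of_forall fun s hs x hx => ?bound) intervalIntegrable_const
    (Filter.Eventually.of_forall fun s _ x hx => ?deriv)
  · simpa only [intervalIntegral.integral_const_mul] using key.2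
  case bound =>
    rw [norm_mul, norm_neg, Real.norm_eq_abs]
    exact mul_le_mul_of_nonneg_left
      (hB (x, s) ⟨Metric.ball_subset_closedBall hx, uIoc_subset_uIcc hs⟩) (abs_nonneg p)
  case deriv =>
    have hx' := hpos x (Metric.ball_subset_closedBall hx) s
    refine ((((hasDerivAt_id x).const_sub (g s)).rpow_const (p := p) (Or.inl hx'.ne')).const_mul
      (A s)).congr_deriv ?_
    simp only [id]
    ring

section Profile

variable {r L : ℝ}

theorem one_le_profileXi (r L s : ℝ) : 1 ≤ profileXi r L s := by
  unfold profileXi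
  split_ifs with h
  · rfl
  · linarith [rpow_nonneg (sub_nonneg.2 (not_le.1 h).le) r]

theorem profileXi_of_le {s : ℝ} (h : s ≤ L) : profileXi r L s = 1 := if_pos h

theorem profileA_of_le {s : ℝ} (h : s ≤ L) : profileA r L s = 1 := by
  simp [profileA, profileXi', profileXi, h]

theorem profileA_nonneg (r L s : ℝ) : 0 ≤ profileA r L s :=
  div_nonneg (sqrt_nonneg _) (zero_le_one.trans (one_le_profileXi r L s))

theorem continuous_profileXi (hr : 0 < r) : Continuous (profileXi r L) :=
  continuous_const.if_le (continuous_const.add ((continuous_id.sub continuous_const).rpow_const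
    fun _ => Or.inr hr.le)) continuous_id continuous_const fun s hs => by
      simp [hs, zero_rpow hr.ne']

theorem continuous_profileXi' (hr : 1 < r) : Continuous (profileXi' r L) :=
  continuous_const.if_le (continuous_const.mul ((continuous_id.sub continuous_const).rpow_const
    fun _ => Or.inr (sub_nonneg.2 hr.le))) continuous_id continuous_const fun s hs => by
      simp [hs, zero_rpow (sub_ne_zero.2 hr.ne')]

theorem continuous_profileA (hr : 1 < r) : Continuous (profileA r L) :=
  ((continuous_const.add ((continuous_profileXi' hr).pow 2)).sqrt).div
    (continuous_profileXi (zero_lt_one.trans hr))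
    fun s => (zero_lt_one.trans_le (one_le_profileXi r L s)).ne'

theorem one_sub_le_profileXi_sq_sub (r L s k : ℝ) : 1 - k ≤ profileXi r L s ^ 2 - k := by
  nlinarith [one_le_profileXi r L s]

theorem profileXi_sq_sub_pos {k : ℝ} (hk : k < 1) (r L s : ℝ) : 0 < profileXi r L s ^ 2 - k :=
  (sub_pos.2 hk).trans_le (one_sub_le_profileXi_sq_sub r L s k)

end Profile

def profileIntegral (r L b k p : ℝ) : ℝ :=
  ∫ s in (0:ℝ)..b, profileA r L s * (profileXi r L s ^ 2 - k) ^ p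

section ProfileIntegral

variable {r L b k : ℝ}

theorem continuous_profileIntegrand (hr : 1 < r) (hk : k < 1) (p : ℝ) :
    Continuous fun s => profileA r L s * (profileXi r L s ^ 2 - k) ^ p :=
  (continuous_profileA hr).mul <|
    (((continuous_profileXi (zero_lt_one.trans hr)).pow 2).sub continuous_const).rpow_const
      (f := fun s => profileXi r L s ^ 2 - k) fun s => Or.inl (profileXi_sq_sub_pos hk r L s).ne'

theorem hasDerivAt_profileIntegral (hr : 1 < r) (hk : k < 1) (p : ℝ) :
    HasDerivAt (fun x => profileIntegral r L b x p) (-p * profileIntegral r L b k (p - 1)) k :=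
  hasDerivAt_intervalIntegral_mul_rpow_sub (continuous_profileA hr)
    ((continuous_profileXi (zero_lt_one.trans hr)).pow 2)
    (fun s => one_le_pow₀ (one_le_profileXi r L s)) hk

theorem mul_rpow_le_profileIntegral (hr : 1 < r) (hL : 0 ≤ L) (hLb : L ≤ b) (hk : k < 1) (p : ℝ) :
    L * (1 - k) ^ p ≤ profileIntegral r L b k p := by
  have hint := continuous_profileIntegrand (L := L) hr hk p
  have hflat : ∫ s in (0:ℝ)..L, profileA r L s * (profileXi r L s ^ 2 - k) ^ p
      = L * (1 - k) ^ p := by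
    rw [intervalIntegral.integral_congr (g := fun _ => (1 - k) ^ p),
      intervalIntegral.integral_const, smul_eq_mul, sub_zero]
    intro s hs
    rw [uIcc_of_le hL] at hs
    simp only [profileA_of_le hs.2, profileXi_of_le hs.2, one_pow, one_mul]
  have hrest : 0 ≤ ∫ s in L..b, profileA r L s * (profileXi r L s ^ 2 - k) ^ p :=
    intervalIntegral.integral_nonneg hLb fun s _ =>
      mul_nonneg (profileA_nonneg r L s) (rpow_nonneg (profileXi_sq_sub_pos hk r L s).le p)
  rw [profileIntegral, ← intervalIntegral.integral_add_adjacent_intervals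
    (hint.intervalIntegrable 0 L) (hint.intervalIntegrable L b), hflat]
  linarith

theorem exists_profileIntegral_le (hr : 1 < r) (hb : 0 ≤ b) :
    ∃ M, 0 ≤ M ∧ ∀ k < 1, ∀ p ≤ 0, profileIntegral r L b k p ≤ M * (1 - k) ^ p := by
  obtain ⟨B, hB⟩ := (isCompact_Icc (a := 0) (b := b)).exists_bound_of_continuousOn
    (continuous_profileA (L := L) hr).continuousOn
  have hB₀ : 0 ≤ B := (norm_nonneg _).trans (hB 0 ⟨le_rfl, hb⟩)
  refine ⟨b * B, mul_nonneg hb hB₀, fun k hk p hp => ?_⟩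
  have hmono := intervalIntegral.integral_mono_on hb
    ((continuous_profileIntegrand (L := L) hr hk p).intervalIntegrable 0 b)
    (intervalIntegrable_const (μ := volume) (c := B * (1 - k) ^ p)) fun s hs =>
      mul_le_mul ((le_abs_self _).trans (hB s hs))
        (rpow_le_rpow_of_nonpos (sub_pos.2 hk) (one_sub_le_profileXi_sq_sub r L s k) hp)
        (rpow_nonneg (profileXi_sq_sub_pos hk r L s).le p) hB₀
  rwa [intervalIntegral.integral_const, smul_eq_mul, sub_zero, ← mul_assoc] at hmono

theorem rpow_neg_half_add_mul_rpow_neg_three_halves (hk : k < 1) :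
    (1 - k) ^ (-(1/2) : ℝ) + k * (1 - k) ^ (-(3/2) : ℝ) = (1 - k) ^ (-(3/2) : ℝ) := by
  rw [show (-(1/2) : ℝ) = 1 + -(3/2) by norm_num, rpow_add (sub_pos.2 hk), rpow_one]
  ring

theorem mul_rpow_le_profileIntegral_add_mul (hr : 1 < r) (hL : 0 ≤ L) (hLb : L ≤ b)
    (hk₀ : 0 ≤ k) (hk : k < 1) :
    L * (1 - k) ^ (-(3/2) : ℝ) ≤
      profileIntegral r L b k (-(1/2)) + k * profileIntegral r L b k (-(3/2)) := by
  rw [← rpow_neg_half_add_mul_rpow_neg_three_halves hk, mul_add, mul_left_comm]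
  exact add_le_add (mul_rpow_le_profileIntegral hr hL hLb hk _)
    (mul_le_mul_of_nonneg_left (mul_rpow_le_profileIntegral hr hL hLb hk _) hk₀)

theorem exists_profileIntegral_add_mul_le (hr : 1 < r) (hb : 0 ≤ b) :
    ∃ M, 0 ≤ M ∧ ∀ k, 0 ≤ k → k < 1 →
      profileIntegral r L b k (-(1/2)) + k * profileIntegral r L b k (-(3/2)) ≤
        M * (1 - k) ^ (-(3/2) : ℝ) := by
  obtain ⟨M, hM₀, hM⟩ := exists_profileIntegral_le (L := L) hr hb
  refine ⟨M, hM₀, fun k hk₀ hk => ?_⟩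
  rw [← rpow_neg_half_add_mul_rpow_neg_three_halves hk, mul_add, mul_left_comm]
  exact add_le_add (hM k hk _ (by norm_num))
    (mul_le_mul_of_nonneg_left (hM k hk _ (by norm_num)) hk₀)

end ProfileIntegral

theorem hasDerivAt_zetaFun {r L ε₁ a ψ : ℝ} (hr : 1 < r) (hc : a ^ 2 * cos ψ ^ 2 < 1) :
    HasDerivAt (zetaFun r L ε₁ a)
      (-(2 * a * sin ψ * (profileIntegral r L ε₁ (a ^ 2 * cos ψ ^ 2) (-(1/2)) +
        a ^ 2 * cos ψ ^ 2 * profileIntegral r L ε₁ (a ^ 2 * cos ψ ^ 2) (-(3/2))))) ψ := by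
  have hk : HasDerivAt (fun ψ => a ^ 2 * cos ψ ^ 2) (a ^ 2 * (2 * cos ψ * -sin ψ)) ψ := by
    simpa using ((hasDerivAt_cos ψ).pow 2).const_mul (a ^ 2)
  have hI := (hasDerivAt_profileIntegral (L := L) (b := ε₁) hr hc (-(1/2))).comp ψ hk
  refine (((hasDerivAt_cos ψ).const_mul (2 * a)).mul hI).congr_deriv ?_
  norm_num
  ring

theorem exists_neg_deriv_zetaFun_bounds {r L ε₁ a : ℝ} (hr : 1 < r) (hL : 0 < L) (hLε : L < ε₁)
    (ha : 1 < a) :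
    ∃ K > 0, ∃ M ≥ 0, ∀ ψ ∈ Ioo 0 π, (a * cos ψ) ^ 2 < 1 →
      DifferentiableAt ℝ (zetaFun r L ε₁ a) ψ ∧
      K * (1 - (a * cos ψ) ^ 2) ^ (-(3/2) : ℝ) ≤ -deriv (zetaFun r L ε₁ a) ψ ∧
      -deriv (zetaFun r L ε₁ a) ψ ≤ M * (1 - (a * cos ψ) ^ 2) ^ (-(3/2) : ℝ) := by
  obtain ⟨M, hM₀, hM⟩ := exists_profileIntegral_add_mul_le (L := L) hr (hL.trans hLε).le
  have hκ : 0 < √(a ^ 2 - 1) := sqrt_pos.2 (by nlinarith)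
  refine ⟨2 * √(a ^ 2 - 1) * L, by positivity, 2 * a * M, by positivity, fun ψ hψ hc => ?_⟩
  have hsin : 0 < sin ψ := sin_pos_of_pos_of_lt_pi hψ.1 hψ.2
  have hκ_le : √(a ^ 2 - 1) ≤ a * sin ψ := by
    rw [sqrt_le_left (by positivity)]
    nlinarith [sin_sq_add_cos_sq ψ]
  have hP_lb := mul_rpow_le_profileIntegral_add_mul hr hL.le hLε.le (sq_nonneg _) hc
  have hP_ub := hM _ (sq_nonneg _) hc
  have hk : a ^ 2 * cos ψ ^ 2 = (a * cos ψ) ^ 2 := (mul_pow a (cos ψ) 2).symm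
  have hd := hasDerivAt_zetaFun (L := L) (ε₁ := ε₁) hr (hk ▸ hc)
  rw [hk] at hd
  rw [hd.deriv, neg_neg]
  refine ⟨hd.differentiableAt, ?_, ?_⟩
  · have := mul_le_mul (mul_le_mul_of_nonneg_left hκ_le zero_le_two) hP_lb (by positivity)
      (by positivity)
    linarith
  · calc 2 * a * sin ψ * _ ≤ 2 * a * 1 * (M * (1 - (a * cos ψ) ^ 2) ^ (-(3/2) : ℝ)) := by
          gcongr
          · exact (by positivity : (0:ℝ) ≤ L * _).trans hP_lb
          · exact sin_le_one ψ
      _ = _ := by ring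

theorem one_sub_sq_mem_band {n : ℕ} (hn : 1 ≤ n) {c : ℝ}
    (h₁ : 1 - 1 / (n : ℝ) ^ 2 < c) (h₂ : c < 1 - 1 / ((n : ℝ) + 1) ^ 2) :
    1 / ((n : ℝ) + 1) ^ 2 < 1 - c ^ 2 ∧ 1 - c ^ 2 < 2 / (n : ℝ) ^ 2 := by
  have hc₀ : 0 ≤ c := by
    have : 1 / (n : ℝ) ^ 2 ≤ 1 :=
      div_le_one_of_le₀ (one_le_pow₀ (by exact_mod_cast hn)) (by positivity)
    linarith
  have hc₁ : c < 1 := by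
    have : 0 < 1 / ((n : ℝ) + 1) ^ 2 := by positivity
    linarith
  rw [show 1 - c ^ 2 = (1 - c) * (1 + c) by ring, show (2 : ℝ) / n ^ 2 = 1 / n ^ 2 * 2 by ring]
  constructor
  · nlinarith [mul_nonneg (sub_nonneg.2 hc₁.le) hc₀]
  · exact mul_lt_mul'' (by linarith) (by linarith) (by linarith) (by linarith)

theorem rpow_neg_three_halves_mem_band {n : ℕ} (hn : 1 ≤ n) {δ : ℝ}
    (h₁ : 1 / ((n : ℝ) + 1) ^ 2 < δ) (h₂ : δ < 2 / (n : ℝ) ^ 2) :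
    (n : ℝ) ^ 3 / 4 ≤ δ ^ (-(3/2) : ℝ) ∧ δ ^ (-(3/2) : ℝ) ≤ 8 * (n : ℝ) ^ 3 := by
  have hn₁ : (1 : ℝ) ≤ n := by exact_mod_cast hn
  have hδ : 0 < δ := lt_trans (by positivity) h₁
  have hsqrt : δ ^ (-(3/2) : ℝ) = (√δ ^ 3)⁻¹ := by
    rw [sqrt_eq_rpow, ← rpow_natCast, ← rpow_mul hδ.le, ← rpow_neg hδ.le]
    norm_num
  have hlt : √δ < 3 / (2 * (n : ℝ)) := by
    refine (sqrt_lt' (by positivity)).2 (h₂.trans_le ?_)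
    rw [div_pow, mul_pow, div_le_div_iff₀ (by positivity) (by positivity)]
    nlinarith
  have hgt : 1 / ((n : ℝ) + 1) < √δ := (lt_sqrt (by positivity)).2 (by rwa [div_pow, one_pow])
  rw [hsqrt]
  constructor
  · calc (n : ℝ) ^ 3 / 4 ≤ ((3 / (2 * (n : ℝ))) ^ 3)⁻¹ := by
          rw [div_pow, inv_div, div_le_div_iff₀ (by norm_num) (by norm_num)]
          nlinarith [pow_pos (zero_lt_one.trans_le hn₁) 3]
      _ ≤ (√δ ^ 3)⁻¹ :=
          inv_anti₀ (by positivity) (pow_le_pow_left₀ (sqrt_nonneg _) hlt.le 3)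
  · calc (√δ ^ 3)⁻¹ ≤ ((1 / ((n : ℝ) + 1)) ^ 3)⁻¹ :=
          inv_anti₀ (by positivity) (pow_le_pow_left₀ (by positivity) hgt.le 3)
      _ = ((n : ℝ) + 1) ^ 3 := by rw [one_div, inv_pow, inv_inv]
      _ ≤ (2 * (n : ℝ)) ^ 3 := pow_le_pow_left₀ (by positivity) (by linarith) 3
      _ = 8 * (n : ℝ) ^ 3 := by ring

/-- Lemma 3.2(3a), first derivative: on the `n`-th crossing homogeneity band
`1 - 1/n² < a cos ψ < 1 - 1/(n+1)²`, the function `ζ` is differentiable and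
`ζ'(ψ) ≈ -n³`. -/
theorem zeta_deriv_crossing_band
    (r L ε₁ : ℝ) (hr : 4 < r) (hL : 0 < L) (hLε : L < ε₁)
    (a : ℝ) (ha : a = 1 + (ε₁ - L) ^ r) :
    ∃ C : ℝ, 1 < C ∧ ∃ n₀ : ℕ, 1 ≤ n₀ ∧ ∀ n : ℕ, n₀ ≤ n →
      ∀ ψ ∈ Set.Ioo (Real.arccos (1 / a)) (π / 2),
        1 - 1 / (n : ℝ) ^ 2 < a * Real.cos ψ →
        a * Real.cos ψ < 1 - 1 / ((n : ℝ) + 1) ^ 2 →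
        DifferentiableAt ℝ (zetaFun r L ε₁ a) ψ ∧
        (n : ℝ) ^ 3 / C ≤ -deriv (zetaFun r L ε₁ a) ψ ∧
        -deriv (zetaFun r L ε₁ a) ψ ≤ C * (n : ℝ) ^ 3 := by
  have ha₁ : 1 < a := ha ▸ lt_add_of_pos_right 1 (rpow_pos_of_pos (sub_pos.2 hLε) r)
  obtain ⟨K, hK, M, hM, hζ⟩ := exists_neg_deriv_zetaFun_bounds (by linarith : 1 < r) hL hLε ha₁
  refine ⟨max 2 (max (4 / K) (8 * M)), lt_max_of_lt_left one_lt_two, 1, le_rfl, ?_⟩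
  intro n hn ψ ⟨hψ₀, hψ₁⟩ h₁ h₂
  obtain ⟨hδ₁, hδ₂⟩ := one_sub_sq_mem_band hn h₁ h₂
  obtain ⟨hn_lb, hn_ub⟩ := rpow_neg_three_halves_mem_band hn hδ₁ hδ₂
  have hψ : ψ ∈ Ioo 0 π := ⟨(arccos_nonneg _).trans_lt hψ₀, by linarith [pi_pos]⟩
  obtain ⟨hd, hζ_lb, hζ_ub⟩ :=
    hζ ψ hψ (by linarith [show 0 < 1 / ((n : ℝ) + 1) ^ 2 by positivity])
  refine ⟨hd, ?_, ?_⟩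
  · calc (n : ℝ) ^ 3 / max 2 (max (4 / K) (8 * M)) ≤ (n : ℝ) ^ 3 / (4 / K) :=
          div_le_div_of_nonneg_left (by positivity) (by positivity)
            (le_max_of_le_right (le_max_left _ _))
      _ = K * ((n : ℝ) ^ 3 / 4) := by field_simp
      _ ≤ _ := (by gcongr : _ ≤ K * _).trans hζ_lb
  · calc _ ≤ M * (8 * (n : ℝ) ^ 3) := hζ_ub.trans (by gcongr)
      _ = 8 * M * (n : ℝ) ^ 3 := by ring
      _ ≤ _ := by gcongr; exact le_max_of_le_right (le_max_right _ _)
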